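/- Let G be a group, K ⊆ G a subset, φ : G → ℝ a homogeneous quasi-morphism with defect at most D (i.e., |φ(gh) − φ(g) − φ(h)| ≤ D for all g, h, and φ(gᵖ) = p·φ(g) for all g and p ∈ ℤ), and C ≥ 0 a constant with |φ(k)| ≤ C for all k ∈ K. If g ∈ G can be written as a product g = f₁ ⋯ f_n (n ≥ 1) where each f_i is conjugate to an element of K or to the inverse of an element of K, then |φ(g)| ≤ n·(D + C). In particular, |φ(g)| ≤ (D + C) · q_K(g) whenever q_K(g) is finite. -/

import Mathlib

/-- The conjugation-generated norm `q_K` : the infimum in `ℕ∞` of the lengths of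
expressions of `g` as a product of elements each conjugate to an element of `K`
or to the inverse of an element of `K`. -/
noncomputable def qNorm {G : Type*} [Group G] (K : Set G) (g : G) : ℕ∞ :=
  sInf {n : ℕ∞ | ∃ l : List G, (l.length : ℕ∞) = n ∧ l.prod = g ∧
    ∀ x ∈ l, ∃ k ∈ K, IsConj k x ∨ IsConj k⁻¹ x}

/-!
Homogeneous quasi-morphisms are conjugation invariant: `φ(h g h⁻¹) - φ(g)` is bounded by `2D`
for every `g`, and applying this to `gⁿ` multiplies the left side by `n`. Hence `φ` is bounded
by `C` on every conjugate of `K ∪ K⁻¹`, and each further factor of a product costs at most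
`D + C`.
-/

lemma eq_zero_of_forall_nat_mul_abs_le {x c : ℝ} (h : ∀ n : ℕ, n * |x| ≤ c) : x = 0 := by
  by_contra hx
  obtain ⟨n, hn⟩ := exists_nat_gt (c / |x|)
  rw [div_lt_iff₀ (abs_pos.2 hx)] at hn
  exact (h n).not_gt hn

section Quasimorphism

variable {G : Type*} [Group G] {φ : G → ℝ} {D : ℝ}

lemma map_one_of_map_zpow (hhom : ∀ (g : G) (p : ℤ), φ (g ^ p) = p * φ g) : φ 1 = 0 := by
  simpa using hhom 1 0

lemma map_inv_of_map_zpow (hhom : ∀ (g : G) (p : ℤ), φ (g ^ p) = p * φ g) (g : G) :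
    φ g⁻¹ = -φ g := by
  simpa using hhom g (-1)

lemma abs_map_conj_sub_le (hD : ∀ g h : G, |φ (g * h) - φ g - φ h| ≤ D)
    (hinv : ∀ g : G, φ g⁻¹ = -φ g) (h x : G) :
    |φ (h * x * h⁻¹) - φ x| ≤ 2 * D :=
  calc |φ (h * x * h⁻¹) - φ x|
      = |(φ (h * x * h⁻¹) - φ (h * x) - φ h⁻¹) + (φ (h * x) - φ h - φ x)| := by
        rw [hinv]; ring_nf
    _ ≤ D + D := (abs_add_le _ _).trans (add_le_add (hD _ _) (hD _ _))
    _ = 2 * D := by ring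

lemma map_conj_of_map_zpow (hD : ∀ g h : G, |φ (g * h) - φ g - φ h| ≤ D)
    (hhom : ∀ (g : G) (p : ℤ), φ (g ^ p) = p * φ g) (h g : G) :
    φ (h * g * h⁻¹) = φ g := by
  refine sub_eq_zero.1 (eq_zero_of_forall_nat_mul_abs_le (c := 2 * D) fun n ↦ ?_)
  have := abs_map_conj_sub_le hD (map_inv_of_map_zpow hhom) h (g ^ (n : ℤ))
  rwa [← conj_zpow, hhom, hhom, ← mul_sub, abs_mul, Int.cast_natCast, Nat.abs_cast] at this

lemma IsConj.map_eq_of_map_zpow (hD : ∀ g h : G, |φ (g * h) - φ g - φ h| ≤ D)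
    (hhom : ∀ (g : G) (p : ℤ), φ (g ^ p) = p * φ g) {a b : G} (hab : IsConj a b) :
    φ a = φ b := by
  obtain ⟨c, rfl⟩ := isConj_iff.1 hab
  exact (map_conj_of_map_zpow hD hhom c a).symm

lemma abs_map_list_prod_le (hD : ∀ g h : G, |φ (g * h) - φ g - φ h| ≤ D) (h1 : φ 1 = 0)
    {C : ℝ} {l : List G} (hl : ∀ x ∈ l, |φ x| ≤ C) :
    |φ l.prod| ≤ l.length * (D + C) := by
  induction l with
  | nil => simp [h1]
  | cons x t ih =>
    have ht := ih fun y hy ↦ hl y (List.mem_cons_of_mem x hy)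
    calc |φ (x :: t).prod|
        = |(φ (x * t.prod) - φ x - φ t.prod) + φ x + φ t.prod| := by
          rw [List.prod_cons]; ring_nf
      _ ≤ |φ (x * t.prod) - φ x - φ t.prod| + |φ x| + |φ t.prod| := abs_add_three _ _ _
      _ ≤ D + C + t.length * (D + C) := by
        gcongr
        exacts [hD _ _, hl x List.mem_cons_self]
      _ = (x :: t).length * (D + C) := by rw [List.length_cons]; push_cast; ring

end Quasimorphism

lemma exists_list_of_qNorm_ne_top {G : Type*} [Group G] {K : Set G} {g : G}
    (hg : qNorm K g ≠ ⊤) :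
    ∃ l : List G, l.prod = g ∧ (∀ x ∈ l, ∃ k ∈ K, IsConj k x ∨ IsConj k⁻¹ x) ∧
      qNorm K g = l.length := by
  have hne : {n : ℕ∞ | ∃ l : List G, (l.length : ℕ∞) = n ∧ l.prod = g ∧
      ∀ x ∈ l, ∃ k ∈ K, IsConj k x ∨ IsConj k⁻¹ x}.Nonempty := by
    by_contra hempty
    exact hg (by rw [qNorm, Set.not_nonempty_iff_eq_empty.1 hempty, sInf_empty])
  obtain ⟨l, hlen, hprod, hl⟩ := csInf_mem hne
  exact ⟨l, hprod, hl, hlen.symm⟩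

theorem quasimorphism_qNorm_lower_bound_general {G : Type*} [Group G] (K : Set G)
    (φ : G → ℝ) (D C : ℝ)
    (hD : ∀ g h : G, |φ (g * h) - φ g - φ h| ≤ D)
    (hhom : ∀ (g : G) (p : ℤ), φ (g ^ p) = p * φ g)
    (hCK : ∀ k ∈ K, |φ k| ≤ C) :
    (∀ (g : G) (l : List G), l ≠ [] → l.prod = g →
      (∀ x ∈ l, ∃ k ∈ K, IsConj k x ∨ IsConj k⁻¹ x) →
      |φ g| ≤ (l.length : ℝ) * (D + C)) ∧
    (∀ g : G, qNorm K g ≠ ⊤ → |φ g| ≤ (D + C) * ((qNorm K g).toNat : ℝ)) := by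
  have hfactor : ∀ x : G, (∃ k ∈ K, IsConj k x ∨ IsConj k⁻¹ x) → |φ x| ≤ C := by
    rintro x ⟨k, hk, hconj | hconj⟩
    · rw [← hconj.map_eq_of_map_zpow hD hhom]
      exact hCK k hk
    · rw [← hconj.map_eq_of_map_zpow hD hhom, map_inv_of_map_zpow hhom, abs_neg]
      exact hCK k hk
  have hprod : ∀ l : List G, (∀ x ∈ l, ∃ k ∈ K, IsConj k x ∨ IsConj k⁻¹ x) →
      |φ l.prod| ≤ l.length * (D + C) := fun l hl ↦
    abs_map_list_prod_le hD (map_one_of_map_zpow hhom) fun x hx ↦ hfactor x (hl x hx)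
  refine ⟨fun g l _ hg hl ↦ hg ▸ hprod l hl, fun g hg ↦ ?_⟩
  obtain ⟨l, rfl, hl, hq⟩ := exists_list_of_qNorm_ne_top hg
  rw [hq, ENat.toNat_natCast, mul_comm]
  exact hprod l hl

/-- If `φ` is a homogeneous quasi-morphism with defect at most `D` which is bounded
by `C` on `K`, and `g` is a product of `n ≥ 1` conjugates of elements of `K ∪ K⁻¹`,
then `|φ(g)| ≤ n (D + C)`; in particular `|φ(g)| ≤ (D + C) q_K(g)` when `q_K(g)` is
finite. -/
theorem quasimorphism_qNorm_lower_bound {G : Type*} [Group G] (K : Set G)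
    (φ : G → ℝ) (D C : ℝ)
    (hD : ∀ g h : G, |φ (g * h) - φ g - φ h| ≤ D)
    (hhom : ∀ (g : G) (p : ℤ), φ (g ^ p) = p * φ g)
    (hC : 0 ≤ C) (hCK : ∀ k ∈ K, |φ k| ≤ C) :
    (∀ (g : G) (l : List G), l ≠ [] → l.prod = g →
      (∀ x ∈ l, ∃ k ∈ K, IsConj k x ∨ IsConj k⁻¹ x) →
      |φ g| ≤ (l.length : ℝ) * (D + C)) ∧
    (∀ g : G, qNorm K g ≠ ⊤ → |φ g| ≤ (D + C) * ((qNorm K g).toNat : ℝ)) :=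
  quasimorphism_qNorm_lower_bound_general K φ D C hD hhom hCK
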